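/- arXiv:1606.06566 — 5 statements merged into one kernel-verified Lean document; each statement's English description precedes it below -/
import Mathlib

section
/- In any tree decomposition of a graph G containing the complete bipartite graph K_{p,q} as a subgraph (with sides A of size p and B of size q), there is a bag that contains all of A or a bag that contains all of B. -/
/-- `B : Fin m → Finset V` is a path decomposition of `G`: every vertex is in some
bag, every edge is contained in some bag, and each vertex's bags form an interval. -/
def IsPathDecomp {V : Type} (G : SimpleGraph V) {m : ℕ} (B : Fin m → Finset V) : Prop :=
  (∀ v : V, ∃ i, v ∈ B i) ∧
  (∀ u v : V, G.Adj u v → ∃ i, u ∈ B i ∧ v ∈ B i) ∧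
  (∀ (v : V) (i j l : Fin m), i ≤ j → j ≤ l → v ∈ B i → v ∈ B l → v ∈ B j)

/-- The path-width of `G`: the least `k` such that `G` has a path decomposition
all of whose bags have at most `k + 1` vertices. -/
noncomputable def pathwidth {V : Type} (G : SimpleGraph V) : ℕ :=
  sInf {k | ∃ (m : ℕ) (B : Fin m → Finset V),
    IsPathDecomp G B ∧ ∀ i, (B i).card ≤ k + 1}

/-- `(T, B)` is a tree decomposition of `G`: `T` is a tree, every vertex is in some
bag, every edge is contained in some bag, and each vertex's bags induce a subtree
(a connected subgraph) of `T`. -/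
def IsTreeDecomp {V I : Type} (G : SimpleGraph V) (T : SimpleGraph I) (B : I → Finset V) : Prop :=
  T.IsTree ∧
  (∀ v : V, ∃ i, v ∈ B i) ∧
  (∀ u v : V, G.Adj u v → ∃ i, u ∈ B i ∧ v ∈ B i) ∧
  (∀ v : V, (T.induce {i : I | v ∈ B i}).Connected)

/-- The tree-width of `G`: the least `k` such that `G` has a tree decomposition
all of whose bags have at most `k + 1` vertices. -/
noncomputable def treewidth {V : Type} (G : SimpleGraph V) : ℕ :=
  sInf {k | ∃ (I : Type) (T : SimpleGraph I) (B : I → Finset V),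
    IsTreeDecomp G T B ∧ ∀ i, (B i).card ≤ k + 1}

/-!
The vertex sets `Tᵥ = {i | v ∈ Bags i}` are subtrees of the decomposition tree. If the subtrees of
the vertices of `A` pairwise meet, they have a common node by the Helly property of subtrees. Otherwise
two of them, `T_{a₁}` and `T_{a₂}`, are disjoint; the path between them leaves `T_{a₁}` along a bridge
`cd`, and every subtree meeting both must contain `d`. Each `T_b`, `b ∈ B`, meets both (edges `a₁b`,
`a₂b`), so the bag at `d` contains `B`. The same separation argument, applied to the intersection of
the first `n` subtrees and the `(n+1)`-st, proves the Helly property by induction.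
-/

namespace SimpleGraph

variable {V : Type*} {G : SimpleGraph V}

theorem Walk.exists_eq_append_cons_boundary {u v : V} (p : G.Walk u v) (S : Set V)
    (hu : u ∈ S) (hv : v ∉ S) :
    ∃ (c d : V) (h : G.Adj c d) (p₁ : G.Walk u c) (p₂ : G.Walk d v),
      c ∈ S ∧ d ∉ S ∧ p = p₁.append (cons h p₂) := by
  induction p with
  | nil => exact absurd hu hv
  | @cons u w v h p ih =>
    by_cases hw : w ∈ S
    · obtain ⟨c, d, h', p₁, p₂, hc, hd, rfl⟩ := ih hw hv
      exact ⟨c, d, h', cons h p₁, p₂, hc, hd, rfl⟩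
    · exact ⟨u, w, h, nil, p, hu, hw, rfl⟩

/-- In a tree, the path-convex sets are exactly the vertex sets of subtrees. -/
def IsPathConvex (G : SimpleGraph V) (S : Set V) : Prop :=
  ∀ ⦃x y : V⦄, x ∈ S → y ∈ S → ∀ p : G.Walk x y, p.IsPath → ∀ k ∈ p.support, k ∈ S

theorem IsPathConvex.biInter {ι : Type*} {s : Set ι} {C : ι → Set V}
    (hC : ∀ a ∈ s, G.IsPathConvex (C a)) : G.IsPathConvex (⋂ a ∈ s, C a) := by
  intro x y hx hy p hp k hk
  simp only [Set.mem_iInter] at hx hy ⊢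
  exact fun a ha => hC a ha (hx a ha) (hy a ha) p hp k hk

theorem IsAcyclic.isPathConvex {S : Set V} (hG : G.IsAcyclic)
    (hS : (G.induce S).Preconnected) : G.IsPathConvex S := by
  classical
  intro x y hx hy p hp k hk
  obtain ⟨q⟩ := hS ⟨x, hx⟩ ⟨y, hy⟩
  let q' : G.Walk x y := q.map (Embedding.induce S).toHom
  have hpq : p = q'.bypass :=
    congrArg Subtype.val ((hG.subsingleton_path x y).elim ⟨p, hp⟩ ⟨_, q'.bypass_isPath⟩)
  subst hpq
  have hk' : k ∈ (q.map (Embedding.induce S).toHom).support := q'.support_bypass_subset_support hk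
  rw [Walk.support_map, List.mem_map] at hk'
  obtain ⟨k', -, rfl⟩ := hk'
  exact k'.2

theorem IsTree.exists_separating_vertex (hG : G.IsTree) {S₁ S₂ : Set V}
    (h₁ : G.IsPathConvex S₁) (h₂ : G.IsPathConvex S₂) (hdisj : Disjoint S₁ S₂)
    {i₁ i₂ : V} (hi₁ : i₁ ∈ S₁) (hi₂ : i₂ ∈ S₂) :
    ∃ d ∉ S₁, ∀ C, G.IsPathConvex C → (C ∩ S₁).Nonempty → (C ∩ S₂).Nonempty → d ∈ C := by
  have hpath := hG.1.preconnected.exists_isPath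
  obtain ⟨p, hp⟩ := hpath i₁ i₂
  obtain ⟨c, d, hcd, p₁, p₂, hc, hd, rfl⟩ :=
    p.exists_eq_append_cons_boundary S₁ hi₁ (hdisj.notMem_of_mem_right hi₂)
  have hcp₂ : c ∉ p₂.support := ((Walk.cons_isPath_iff _ _).mp hp.of_append_right).2
  refine ⟨d, hd, fun C hC ⟨x, hxC, hx⟩ ⟨y, hyC, hy⟩ => ?_⟩
  obtain ⟨r₁, hr₁⟩ := hpath c x
  obtain ⟨q, hq⟩ := hpath x y
  obtain ⟨r₂, hr₂⟩ := hpath y i₂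
  -- The walk `c ⟶ x ⟶ y ⟶ i₂ ⟶ d` must cross the bridge `cd`, and only its middle part can.
  have hbridge : s(c, d) ∈ (r₁.append (q.append (r₂.append p₂.reverse))).edges :=
    isBridge_iff_forall_walk_mem_edges.mp (isAcyclic_iff_forall_adj_isBridge.mp hG.2 hcd) _
  simp only [Walk.edges_append, Walk.edges_reverse, List.mem_append, List.mem_reverse] at hbridge
  rcases hbridge with he | he | he | he
  · exact absurd (h₁ hc hx r₁ hr₁ d (r₁.snd_mem_support_of_mem_edges he)) hd
  · exact hC hxC hyC q hq d (q.snd_mem_support_of_mem_edges he)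
  · exact absurd (h₂ hy hi₂ r₂ hr₂ c (r₂.fst_mem_support_of_mem_edges he))
      (hdisj.notMem_of_mem_left hc)
  · exact absurd (p₂.fst_mem_support_of_mem_edges he) hcp₂

theorem IsTree.helly_theorem {ι : Type*} (hG : G.IsTree) {C : ι → Set V} (s : Finset ι)
    (hC : ∀ a ∈ s, G.IsPathConvex (C a)) (hpair : ∀ a ∈ s, ∀ b ∈ s, (C a ∩ C b).Nonempty) :
    (⋂ a ∈ s, C a).Nonempty := by
  classical
  induction s using Finset.induction_on with
  | empty => have := hG.nonempty; simp
  | @insert a s ha ih =>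
    simp only [Finset.mem_insert, forall_eq_or_imp] at hC hpair
    obtain ⟨k, hk⟩ := ih hC.2 fun b hb c hc => (hpair.2 b hb).2 c hc
    rw [Finset.set_biInter_insert]
    by_contra hmeet
    obtain ⟨d, hd, hsep⟩ := hG.exists_separating_vertex (IsPathConvex.biInter hC.2) hC.1
      (Set.disjoint_left.mpr fun i hi hia => hmeet ⟨i, hia, hi⟩) hk (hpair.1.1).some_mem.1
    refine hd (Set.mem_iInter₂.mpr fun b hb => hsep (C b) (hC.2 b hb) ⟨k, ?_, hk⟩ ?_)
    · exact Set.mem_iInter₂.mp hk b hb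
    · exact (hpair.2 b hb).1

end SimpleGraph

open SimpleGraph

theorem bag_contains_side_general (V I : Type) (G : SimpleGraph V) (T : SimpleGraph I)
    (Bags : I → Finset V) (htd : IsTreeDecomp G T Bags)
    (A B : Finset V) (hbip : ∀ a ∈ A, ∀ b ∈ B, G.Adj a b) :
    (∃ i, A ⊆ Bags i) ∨ (∃ i, B ⊆ Bags i) := by
  obtain ⟨hT, hcover, hedge, hconn⟩ := htd
  let nodes (v : V) : Set I := {i | v ∈ Bags i}
  have hconvex (v : V) : T.IsPathConvex (nodes v) := hT.2.isPathConvex (hconn v).preconnected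
  have hmeet {u v : V} (h : G.Adj u v) : (nodes v ∩ nodes u).Nonempty := by
    obtain ⟨i, hu, hv⟩ := hedge u v h
    exact ⟨i, hv, hu⟩
  by_cases hA : ∀ a ∈ A, ∀ a' ∈ A, (nodes a ∩ nodes a').Nonempty
  · obtain ⟨i, hi⟩ := hT.helly_theorem A (fun a _ => hconvex a) hA
    exact Or.inl ⟨i, fun a ha => Set.mem_iInter₂.mp hi a ha⟩
  · push Not at hA
    obtain ⟨a₁, ha₁, a₂, ha₂, hdisj⟩ := hA
    obtain ⟨i₁, hi₁⟩ := hcover a₁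
    obtain ⟨i₂, hi₂⟩ := hcover a₂
    obtain ⟨d, -, hd⟩ := hT.exists_separating_vertex (hconvex a₁) (hconvex a₂)
      (Set.disjoint_iff_inter_eq_empty.mpr hdisj) hi₁ hi₂
    exact Or.inr ⟨d, fun b hb => hd (nodes b) (hconvex b) (hmeet (hbip a₁ ha₁ b hb))
      (hmeet (hbip a₂ ha₂ b hb))⟩

/-- In any tree decomposition of a graph containing `K_{p,q}` as a subgraph with
sides `A` and `B`, some bag contains all of `A` or some bag contains all of `B`. -/
theorem bag_contains_side (V I : Type) (G : SimpleGraph V) (T : SimpleGraph I)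
    (Bags : I → Finset V) (htd : IsTreeDecomp G T Bags)
    (p q : ℕ) (A B : Finset V) (hA : A.card = p) (hB : B.card = q)
    (hdisj : Disjoint A B) (hbip : ∀ a ∈ A, ∀ b ∈ B, G.Adj a b) :
    (∃ i, A ⊆ Bags i) ∨ (∃ i, B ⊆ Bags i) :=
  bag_contains_side_general V I G T Bags htd A B hbip
end

section
/- If G contains a complete bipartite subgraph K_{p,q} with sides A (|A| = p) and B (|B| = q), and p is strictly greater than the tree-width of G, then adding all edges between pairs of vertices of B does not increase the tree-width of G: the augmented graph has the same tree-width as G. -/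
/-!
In a tree decomposition of width less than `|A|`, the subtrees of any two vertices
`b₁, b₂ ∈ B` must meet: otherwise an edge of the tree separates them, and every `a ∈ A`, being
adjacent to both, has a subtree crossing that edge, so one bag would contain `A ∪ {b₁}`. By the
Helly property of subtrees of a tree, some bag then contains all of `B`, so the same decomposition
also covers the edges added inside `B`.
-/

namespace SimpleGraph

variable {I : Type*} {T : SimpleGraph I} {S S' : Set I} {u v : I}

theorem exists_walk_support_subset_of_connected_induce (hS : (T.induce S).Connected)
    (hu : u ∈ S) (hv : v ∈ S) : ∃ P : T.Walk u v, ∀ w ∈ P.support, w ∈ S := by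
  obtain ⟨Q⟩ := hS.preconnected ⟨u, hu⟩ ⟨v, hv⟩
  refine ⟨Q.map (Embedding.induce S).toHom, fun w hw => ?_⟩
  have hw' : w ∈ Q.support.map (Embedding.induce (G := T) S).toHom := by
    rwa [← Walk.support_map]
  obtain ⟨w', -, rfl⟩ := List.mem_map.mp hw'
  exact w'.2

namespace IsTree

variable (hT : T.IsTree)
include hT

theorem support_subset_of_connected_induce (hS : (T.induce S).Connected) (hu : u ∈ S)
    (hv : v ∈ S) {P : T.Walk u v} (hP : P.IsPath) : ∀ w ∈ P.support, w ∈ S := by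
  classical
  obtain ⟨Q, hQ⟩ := exists_walk_support_subset_of_connected_induce hS hu hv
  rw [(hT.existsUnique_path u v).unique hP Q.bypass_isPath]
  exact fun w hw => hQ w (Q.support_bypass_subset_support hw)

theorem connected_induce_inter (hS : (T.induce S).Connected) (hS' : (T.induce S').Connected)
    (hne : (S ∩ S').Nonempty) : (T.induce (S ∩ S')).Connected := by
  have : Nonempty ↥(S ∩ S') := hne.to_subtype
  refine ⟨fun a b => ?_⟩
  obtain ⟨P, hP, -⟩ := hT.existsUnique_path a.1 b.1
  exact ⟨P.induce (S ∩ S') fun w hw =>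
    ⟨hT.support_subset_of_connected_induce hS a.2.1 b.2.1 hP w hw,
      hT.support_subset_of_connected_induce hS' a.2.2 b.2.2 hP w hw⟩⟩

theorem exists_separating_dart (hS : (T.induce S).Connected) (hS' : (T.induce S').Connected)
    (hdisj : Disjoint S S') (hne : S.Nonempty) (hne' : S'.Nonempty) :
    ∃ d : T.Dart, d.fst ∈ S ∧ d.snd ∉ S ∧ ∀ W : Set I, (T.induce W).Connected →
      (W ∩ S).Nonempty → (W ∩ S').Nonempty → d.fst ∈ W ∧ d.snd ∈ W := by
  classical
  obtain ⟨u, hu⟩ := hne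
  obtain ⟨v, hv⟩ := hne'
  obtain ⟨P, hP, -⟩ := hT.existsUnique_path u v
  obtain ⟨d, hdP, hdS, hdS'⟩ :=
    P.exists_boundary_dart S hu fun h => Set.disjoint_left.mp hdisj h hv
  refine ⟨d, hdS, hdS', fun W hW ⟨w, hwW, hwS⟩ ⟨w', hwW', hwS'⟩ => ?_⟩
  obtain ⟨Q₁, hQ₁⟩ := exists_walk_support_subset_of_connected_induce hS hu hwS
  obtain ⟨Q₂, hQ₂⟩ := exists_walk_support_subset_of_connected_induce hW hwW hwW'
  obtain ⟨Q₃, hQ₃⟩ := exists_walk_support_subset_of_connected_induce hS' hwS' hv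
  -- `P` is the path inside the walk `u ⇝ w ⇝ w' ⇝ v`, so `d` is a dart of one of its pieces.
  have hPQ : P = (Q₁.append (Q₂.append Q₃)).bypass :=
    (hT.existsUnique_path u v).unique hP (Walk.bypass_isPath _)
  have hdQ := (Q₁.append (Q₂.append Q₃)).darts_bypass_subset_darts (hPQ ▸ hdP)
  simp only [Walk.darts_append, List.mem_append] at hdQ
  rcases hdQ with h₁ | h₂ | h₃
  · exact absurd (hQ₁ _ (Q₁.dart_snd_mem_support_of_mem_darts h₁)) hdS'
  · exact ⟨hQ₂ _ (Q₂.dart_fst_mem_support_of_mem_darts h₂),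
      hQ₂ _ (Q₂.dart_snd_mem_support_of_mem_darts h₂)⟩
  · exact absurd (hQ₃ _ (Q₃.dart_fst_mem_support_of_mem_darts h₃))
      (Set.disjoint_left.mp hdisj hdS)

theorem inter_inter_nonempty {S₀ S₁ S₂ : Set I} (h₀ : (T.induce S₀).Connected)
    (h₁ : (T.induce S₁).Connected) (h₂ : (T.induce S₂).Connected)
    (h₀₁ : (S₀ ∩ S₁).Nonempty) (h₀₂ : (S₀ ∩ S₂).Nonempty) (h₁₂ : (S₁ ∩ S₂).Nonempty) :
    (S₀ ∩ S₁ ∩ S₂).Nonempty := by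
  rw [← Set.not_disjoint_iff_nonempty_inter]
  intro hdisj
  obtain ⟨x, hx⟩ := h₀₁
  obtain ⟨d, -, hd, hsep⟩ := hT.exists_separating_dart
    (hT.connected_induce_inter h₀ h₁ ⟨x, hx⟩) h₂ hdisj ⟨x, hx⟩ (h₁₂.mono Set.inter_subset_right)
  exact hd ⟨(hsep S₀ h₀ ⟨x, hx.1, hx⟩ h₀₂).2, (hsep S₁ h₁ ⟨x, hx.2, hx⟩ h₁₂).2⟩

theorem exists_mem_of_pairwise_inter_nonempty {ι : Type*} (s : Finset ι) (S : ι → Set I)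
    (hS : ∀ i ∈ s, (T.induce (S i)).Connected)
    (hpair : ∀ i ∈ s, ∀ j ∈ s, (S i ∩ S j).Nonempty) : ∃ t, ∀ i ∈ s, t ∈ S i := by
  classical
  induction s using Finset.induction_on generalizing S with
  | empty =>
    obtain ⟨t⟩ := hT.connected.nonempty
    exact ⟨t, by simp⟩
  | insert a s _ ih =>
    rcases s.eq_empty_or_nonempty with rfl | hs
    · obtain ⟨t, ht, -⟩ := hpair a (by simp) a (by simp)
      exact ⟨t, by simpa using ht⟩
    have ha' := Finset.mem_insert_self a s
    have hs' : ∀ {i}, i ∈ s → i ∈ insert a s := Finset.mem_insert_of_mem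
    -- Cutting every `S i` down to `S i ∩ S a` keeps the family pairwise intersecting, by the
    -- case of three subtrees.
    obtain ⟨t, ht⟩ := ih (fun i => S i ∩ S a)
      (fun i hi => hT.connected_induce_inter (hS i (hs' hi)) (hS a ha') (hpair i (hs' hi) a ha'))
      (fun i hi j hj => by
        rw [← Set.inter_inter_distrib_right]
        exact hT.inter_inter_nonempty (hS i (hs' hi)) (hS j (hs' hj)) (hS a ha')
          (hpair i (hs' hi) j (hs' hj)) (hpair i (hs' hi) a ha') (hpair j (hs' hj) a ha'))
    obtain ⟨i₀, hi₀⟩ := hs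
    refine ⟨t, fun i hi => ?_⟩
    rcases Finset.mem_insert.mp hi with rfl | hi
    · exact (ht i₀ hi₀).2
    · exact (ht i hi).1

end IsTree

end SimpleGraph

section TreeDecomp

open SimpleGraph

variable {V I : Type} {G H : SimpleGraph V} {T : SimpleGraph I} {bag : I → Finset V}

theorem IsTreeDecomp.mono (hGH : G ≤ H) (h : IsTreeDecomp H T bag) : IsTreeDecomp G T bag :=
  ⟨h.1, h.2.1, fun u v huv => h.2.2.1 u v (hGH huv), h.2.2.2⟩

theorem IsTreeDecomp.of_subset_bag (h : IsTreeDecomp G T bag) {s : Finset V} {i : I}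
    (hs : s ⊆ bag i) (hH : ∀ u v, H.Adj u v → G.Adj u v ∨ u ∈ s ∧ v ∈ s) :
    IsTreeDecomp H T bag := by
  refine ⟨h.1, h.2.1, fun u v huv => ?_, h.2.2.2⟩
  rcases hH u v huv with hG | ⟨hu, hv⟩
  · exact h.2.2.1 u v hG
  · exact ⟨i, hs hu, hs hv⟩

theorem IsTreeDecomp.exists_subset_bag_of_completeBipartite {k : ℕ} (h : IsTreeDecomp G T bag)
    (hsize : ∀ i, (bag i).card ≤ k + 1) {A B : Finset V} (hk : k < A.card)
    (hdisj : Disjoint A B) (hbip : ∀ a ∈ A, ∀ b ∈ B, G.Adj a b) : ∃ i, B ⊆ bag i := by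
  classical
  obtain ⟨hT, hcover, hedge, hconn⟩ := h
  have hpair : ∀ b₁ ∈ B, ∀ b₂ ∈ B, ({i | b₁ ∈ bag i} ∩ {i | b₂ ∈ bag i}).Nonempty := by
    intro b₁ hb₁ b₂ hb₂
    rw [← Set.not_disjoint_iff_nonempty_inter]
    intro hsepd
    obtain ⟨d, hd, -, hsep⟩ :=
      hT.exists_separating_dart (hconn b₁) (hconn b₂) hsepd (hcover b₁) (hcover b₂)
    have hsub : insert b₁ A ⊆ bag d.fst := Finset.insert_subset hd fun a ha =>
      (hsep _ (hconn a) (hedge a b₁ (hbip a ha b₁ hb₁)) (hedge a b₂ (hbip a ha b₂ hb₂))).1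
    have hcard := Finset.card_le_card hsub
    rw [Finset.card_insert_of_notMem (Finset.disjoint_right.mp hdisj hb₁)] at hcard
    have := hsize d.fst
    omega
  exact (hT.exists_mem_of_pairwise_inter_nonempty B (fun v => {i | v ∈ bag i})
    (fun v _ => hconn v) hpair).imp fun i hi b hb => hi b hb

end TreeDecomp

section Treewidth

variable {V : Type} {G H : SimpleGraph V} {k : ℕ}

def HasTreeDecompOfWidthLE (G : SimpleGraph V) (k : ℕ) : Prop :=
  ∃ (I : Type) (T : SimpleGraph I) (bag : I → Finset V),
    IsTreeDecomp G T bag ∧ ∀ i, (bag i).card ≤ k + 1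

theorem HasTreeDecompOfWidthLE.mono (hGH : G ≤ H) (h : HasTreeDecompOfWidthLE H k) :
    HasTreeDecompOfWidthLE G k :=
  let ⟨I, T, bag, hdec, hsize⟩ := h
  ⟨I, T, bag, hdec.mono hGH, hsize⟩

theorem HasTreeDecompOfWidthLE.treewidth_le (h : HasTreeDecompOfWidthLE G k) :
    treewidth G ≤ k :=
  Nat.sInf_le h

theorem hasTreeDecompOfWidthLE_treewidth (h : HasTreeDecompOfWidthLE G k) :
    HasTreeDecompOfWidthLE G (treewidth G) :=
  Nat.sInf_mem (s := {k | HasTreeDecompOfWidthLE G k}) ⟨k, h⟩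

theorem treewidth_eq_zero_of_forall_not (h : ∀ k, ¬ HasTreeDecompOfWidthLE G k) :
    treewidth G = 0 := by
  show sInf {k | HasTreeDecompOfWidthLE G k} = 0
  simp [h]

end Treewidth

theorem treewidth_augment_eq_general (V : Type) (G : SimpleGraph V)
    (p : ℕ) (A B : Finset V) (hA : A.card = p)
    (hdisj : Disjoint A B) (hbip : ∀ a ∈ A, ∀ b ∈ B, G.Adj a b)
    (hp : treewidth G < p) :
    treewidth (SimpleGraph.fromRel (fun u v => G.Adj u v ∨ (u ∈ B ∧ v ∈ B))) =
      treewidth G := by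
  set H := SimpleGraph.fromRel (fun u v => G.Adj u v ∨ (u ∈ B ∧ v ∈ B))
  have hGH : G ≤ H := fun u v huv =>
    (SimpleGraph.fromRel_adj _ u v).mpr ⟨huv.ne, Or.inl (Or.inl huv)⟩
  by_cases hG : HasTreeDecompOfWidthLE G (treewidth G)
  · obtain ⟨I, T, bag, hdec, hsize⟩ := hG
    obtain ⟨i, hi⟩ := hdec.exists_subset_bag_of_completeBipartite hsize (hA ▸ hp) hdisj hbip
    have hH : HasTreeDecompOfWidthLE H (treewidth G) := by
      refine ⟨I, T, bag, hdec.of_subset_bag hi fun u v huv => ?_, hsize⟩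
      obtain ⟨-, (h | h) | (h | h)⟩ := (SimpleGraph.fromRel_adj _ u v).mp huv
      exacts [Or.inl h, Or.inr h, Or.inl h.symm, Or.inr h.symm]
    exact le_antisymm hH.treewidth_le
      ((hasTreeDecompOfWidthLE_treewidth hH).mono hGH).treewidth_le
  · -- Without a decomposition of bounded width (possible for infinite `V`), both tree-widths
    -- are `sInf ∅ = 0`.
    have hH : ∀ k, ¬ HasTreeDecompOfWidthLE H k :=
      fun k hk => hG (hasTreeDecompOfWidthLE_treewidth (hk.mono hGH))
    rw [treewidth_eq_zero_of_forall_not hH,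
      treewidth_eq_zero_of_forall_not fun k hk => hG (hasTreeDecompOfWidthLE_treewidth hk)]

/-- If `G` contains `K_{p,q}` with sides `A`, `B` and `p` exceeds the tree-width of
`G`, then adding all edges between vertices of `B` does not change the tree-width. -/
theorem treewidth_augment_eq (V : Type) [Fintype V] (G : SimpleGraph V)
    (p q : ℕ) (A B : Finset V) (hA : A.card = p) (hB : B.card = q)
    (hdisj : Disjoint A B) (hbip : ∀ a ∈ A, ∀ b ∈ B, G.Adj a b)
    (hp : treewidth G < p) :
    treewidth (SimpleGraph.fromRel (fun u v => G.Adj u v ∨ (u ∈ B ∧ v ∈ B))) =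
      treewidth G :=
  treewidth_augment_eq_general V G p A B hA hdisj hbip hp
end

section
/- If G contains a complete bipartite subgraph K_{p,q} with sides A (|A| = p) and B (|B| = q), and p exceeds the path-width of G, then adding all edges between pairs of vertices of B does not increase the path-width of G. -/
lemma pw_set_mem {V : Type} [Fintype V] (G : SimpleGraph V) :
    Fintype.card V ∈ {k | ∃ (m : ℕ) (B : Fin m → Finset V),
      IsPathDecomp G B ∧ ∀ i, (B i).card ≤ k + 1} := by
  refine ⟨1, fun _ => Finset.univ, ⟨fun v => ⟨0, Finset.mem_univ v⟩,
    fun u v _ => ⟨0, Finset.mem_univ u, Finset.mem_univ v⟩,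
    fun v i j l _ _ _ _ => Finset.mem_univ v⟩, fun i => ?_⟩
  simp

/-- If `G` contains `K_{p,q}` with sides `A`, `B` and `p` exceeds the path-width of
`G`, then adding all edges between vertices of `B` does not change the path-width. -/
theorem pathwidth_augment_eq (V : Type) [Fintype V] (G : SimpleGraph V)
    (p q : ℕ) (A B : Finset V) (hA : A.card = p) (hB : B.card = q)
    (hdisj : Disjoint A B) (hbip : ∀ a ∈ A, ∀ b ∈ B, G.Adj a b)
    (hp : pathwidth G < p) :
    pathwidth (SimpleGraph.fromRel (fun u v => G.Adj u v ∨ (u ∈ B ∧ v ∈ B))) =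
      pathwidth G := by
  classical
  set H := SimpleGraph.fromRel (fun u v => G.Adj u v ∨ (u ∈ B ∧ v ∈ B)) with hHdef
  -- G ≤ H
  have hGH : ∀ u v, G.Adj u v → H.Adj u v := by
    intro u v h
    exact ⟨G.ne_of_adj h, Or.inl (Or.inl h)⟩
  -- pathwidth G ≤ pathwidth H
  have h1 : pathwidth G ≤ pathwidth H := by
    have hne : {k | ∃ (m : ℕ) (D : Fin m → Finset V),
        IsPathDecomp H D ∧ ∀ i, (D i).card ≤ k + 1}.Nonempty := ⟨_, pw_set_mem H⟩
    obtain ⟨m, D, ⟨hcov, hedge, hint⟩, hcard⟩ := Nat.sInf_mem hne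
    exact Nat.sInf_le ⟨m, D, ⟨hcov, fun u v h => hedge u v (hGH u v h), hint⟩, hcard⟩
  -- a good decomposition of G
  have hneG : {k | ∃ (m : ℕ) (D : Fin m → Finset V),
      IsPathDecomp G D ∧ ∀ i, (D i).card ≤ k + 1}.Nonempty := ⟨_, pw_set_mem G⟩
  obtain ⟨m, D, ⟨hcov, hedge, hint⟩, hcard⟩ := Nat.sInf_mem hneG
  have hcardp : ∀ i, (D i).card ≤ p := fun i => le_trans (hcard i) hp
  -- key claim: any two vertices of B share a bag
  have key : ∀ b ∈ B, ∀ b' ∈ B, b ≠ b' → ∃ i, b ∈ D i ∧ b' ∈ D i := by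
    -- first an asymmetric version
    have asym : ∀ b ∈ B, ∀ b' ∈ B,
        ∀ (Sb Sb' : Finset (Fin m)) (h1 : Sb.Nonempty) (h2 : Sb'.Nonempty),
        (∀ i, i ∈ Sb ↔ b ∈ D i) → (∀ i, i ∈ Sb' ↔ b' ∈ D i) →
        Sb.max' h1 < Sb'.min' h2 → False := by
      intro b hb b' hb' Sb Sb' h1 h2 hSb hSb' hlt
      set k := Sb.max' h1 with hk
      have hbk : b ∈ D k := (hSb k).mp (Sb.max'_mem h1)
      have hAk : A ⊆ D k := by
        intro a ha
        obtain ⟨i, hai, hbi⟩ := hedge a b (hbip a ha b hb)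
        obtain ⟨j, haj, hb'j⟩ := hedge a b' (hbip a ha b' hb')
        have hik : i ≤ k := Sb.le_max' i ((hSb i).mpr hbi)
        have hkj : k ≤ j := le_of_lt (lt_of_lt_of_le hlt (Sb'.min'_le j ((hSb' j).mpr hb'j)))
        exact hint a i k j hik hkj hai haj
      have hbA : b ∉ A := fun h => (Finset.disjoint_left.mp hdisj h) hb
      have : (insert b A).card ≤ (D k).card :=
        Finset.card_le_card (Finset.insert_subset hbk hAk)
      rw [Finset.card_insert_of_notMem hbA, hA] at this
      have := le_trans this (hcardp k)
      omega
    intro b hb b' hb' hne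
    by_contra hno
    push_neg at hno
    set Sb : Finset (Fin m) := Finset.univ.filter (fun i => b ∈ D i) with hSbdef
    set Sb' : Finset (Fin m) := Finset.univ.filter (fun i => b' ∈ D i) with hSb'def
    have hSb : ∀ i, i ∈ Sb ↔ b ∈ D i := by intro i; simp [hSbdef]
    have hSb' : ∀ i, i ∈ Sb' ↔ b' ∈ D i := by intro i; simp [hSb'def]
    have h1 : Sb.Nonempty := by
      obtain ⟨i, hi⟩ := hcov b; exact ⟨i, (hSb i).mpr hi⟩
    have h2 : Sb'.Nonempty := by
      obtain ⟨i, hi⟩ := hcov b'; exact ⟨i, (hSb' i).mpr hi⟩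
    rcases lt_or_ge (Sb.max' h1) (Sb'.min' h2) with h | h
    · exact asym b hb b' hb' Sb Sb' h1 h2 hSb hSb' h
    rcases lt_or_ge (Sb'.max' h2) (Sb.min' h1) with h' | h'
    · exact asym b' hb' b hb Sb' Sb h2 h1 hSb' hSb h'
    -- intervals overlap: find common point
    set t := max (Sb.min' h1) (Sb'.min' h2) with ht
    have htb : b ∈ D t := by
      refine hint b (Sb.min' h1) t (Sb.max' h1) (le_max_left _ _) ?_
        ((hSb _).mp (Sb.min'_mem h1)) ((hSb _).mp (Sb.max'_mem h1))
      exact max_le (Sb.min'_le _ (Sb.max'_mem h1)) h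
    have htb' : b' ∈ D t := by
      refine hint b' (Sb'.min' h2) t (Sb'.max' h2) (le_max_right _ _) ?_
        ((hSb' _).mp (Sb'.min'_mem h2)) ((hSb' _).mp (Sb'.max'_mem h2))
      exact max_le h' (Sb'.min'_le _ (Sb'.max'_mem h2))
    exact hno t htb htb'
  -- D is a decomposition of H
  have hHdec : IsPathDecomp H D := by
    refine ⟨hcov, ?_, hint⟩
    intro u v huv
    obtain ⟨hne, h⟩ := huv
    rcases h with (h | ⟨hu, hv⟩) | (h | ⟨hv, hu⟩)
    · exact hedge u v h
    · exact key u hu v hv hne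
    · obtain ⟨i, hvi, hui⟩ := hedge v u h; exact ⟨i, hui, hvi⟩
    · exact key u hu v hv hne
  have h2 : pathwidth H ≤ pathwidth G := Nat.sInf_le ⟨m, D, hHdec, hcard⟩
  omega
end

section
/- Let v be a simplicial vertex of a graph G with path-width k. Then the path-width of G is at most (path-width of G − v) + 1, and at least max(path-width of G − v, deg(v)). -/
lemma pw_spec {V : Type} [Fintype V] (G : SimpleGraph V) :
    ∃ (m : ℕ) (B : Fin m → Finset V), IsPathDecomp G B ∧ ∀ i, (B i).card ≤ pathwidth G + 1 := by
  have h : {k | ∃ (m : ℕ) (B : Fin m → Finset V),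
      IsPathDecomp G B ∧ ∀ i, (B i).card ≤ k + 1}.Nonempty := by
    refine ⟨Fintype.card V, 1, fun _ => Finset.univ,
      ⟨fun u => ⟨0, Finset.mem_univ u⟩,
       fun u w _ => ⟨0, Finset.mem_univ u, Finset.mem_univ w⟩,
       fun _ _ _ _ _ _ _ _ => Finset.mem_univ _⟩,
      fun _ => by simp⟩
  exact Nat.sInf_mem h

lemma pw_le {V : Type} (G : SimpleGraph V) (k : ℕ)
    (h : ∃ (m : ℕ) (B : Fin m → Finset V), IsPathDecomp G B ∧ ∀ i, (B i).card ≤ k + 1) :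
    pathwidth G ≤ k := Nat.sInf_le h

lemma clique_subset_bag {V : Type} [DecidableEq V] {G : SimpleGraph V} {m : ℕ}
    {B : Fin m → Finset V} (hB : IsPathDecomp G B) (C : Finset V) (hC : C.Nonempty)
    (hclique : ∀ u ∈ C, ∀ w ∈ C, u ≠ w → G.Adj u w) : ∃ i, C ⊆ B i := by
  classical
  have hne : ∀ u : V, (Finset.univ.filter (fun i => u ∈ B i)).Nonempty := by
    intro u
    obtain ⟨i, hi⟩ := hB.1 u
    exact ⟨i, by simp [hi]⟩
  set f : V → Fin m := fun u => (Finset.univ.filter (fun i => u ∈ B i)).min' (hne u) with hf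
  have hfmem : ∀ u, u ∈ B (f u) := by
    intro u
    have := Finset.min'_mem (Finset.univ.filter (fun i => u ∈ B i)) (hne u)
    simpa [hf] using this
  have hfle : ∀ u (j : Fin m), u ∈ B j → f u ≤ j := by
    intro u j hj
    exact Finset.min'_le _ _ (by simp [hj])
  obtain ⟨u₀, hu₀C, hmax⟩ := Finset.exists_max_image C f hC
  refine ⟨f u₀, fun w hw => ?_⟩
  by_cases hwu : w = u₀
  · subst hwu; exact hfmem w
  · obtain ⟨j, hwj, huj⟩ := hB.2.1 w u₀ (hclique w hw u₀ hu₀C hwu)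
    exact hB.2.2 w (f w) (f u₀) j (hmax w hw) (hfle u₀ j huj) (hfmem w) hwj

/-- If `v` is a simplicial vertex of `G`, the path-width of `G` is at most
`pathwidth (G - v) + 1` and at least `max (pathwidth (G - v)) (deg v)`. -/
theorem pathwidth_simplicial (V : Type) [Fintype V] [DecidableEq V] (G : SimpleGraph V)
    [DecidableRel G.Adj] (v : V) (k : ℕ) (hk : pathwidth G = k)
    (hsimp : ∀ u w : V, G.Adj v u → G.Adj v w → u ≠ w → G.Adj u w) :
    pathwidth G ≤ pathwidth (G.induce {u : V | u ≠ v}) + 1 ∧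
      max (pathwidth (G.induce {u : V | u ≠ v})) (G.degree v) ≤ pathwidth G := by
  classical
  set S : Set V := {u : V | u ≠ v} with hS
  refine ⟨?_, max_le ?_ ?_⟩
  · -- pathwidth G ≤ pathwidth (G.induce S) + 1
    obtain ⟨m, B, hB, hcard⟩ := pw_spec (G.induce S)
    refine pw_le G _ ⟨m + 1, fun i =>
      if h : (i : ℕ) < m then insert v ((B ⟨i, h⟩).image Subtype.val) else {v}, ?_, ?_⟩
    · refine ⟨?_, ?_, ?_⟩
      · intro u
        by_cases huv : u = v
        · refine ⟨0, ?_⟩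
          subst huv
          by_cases h : (0 : ℕ) < m <;> simp [h]
        · obtain ⟨i, hi⟩ := hB.1 ⟨u, huv⟩
          refine ⟨⟨i, Nat.lt_succ_of_lt i.2⟩, ?_⟩
          have h : ((⟨(i : ℕ), Nat.lt_succ_of_lt i.2⟩ : Fin (m+1)) : ℕ) < m := i.2
          simp only [h, dif_pos]
          exact Finset.mem_insert_of_mem (Finset.mem_image.2 ⟨⟨u, huv⟩, by simpa using hi, rfl⟩)
      · intro u w huw
        by_cases huv : u = v
        · have hwv : w ≠ v := fun h => G.irrefl (huv ▸ h ▸ huw)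
          obtain ⟨i, hi⟩ := hB.1 ⟨w, hwv⟩
          refine ⟨⟨i, Nat.lt_succ_of_lt i.2⟩, ?_, ?_⟩
          · have h : ((⟨(i : ℕ), Nat.lt_succ_of_lt i.2⟩ : Fin (m+1)) : ℕ) < m := i.2
            simp [h, huv]
          · have h : ((⟨(i : ℕ), Nat.lt_succ_of_lt i.2⟩ : Fin (m+1)) : ℕ) < m := i.2
            simp only [h, dif_pos]
            exact Finset.mem_insert_of_mem (Finset.mem_image.2 ⟨⟨w, hwv⟩, by simpa using hi, rfl⟩)
        · by_cases hwv : w = v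
          · obtain ⟨i, hi⟩ := hB.1 ⟨u, huv⟩
            refine ⟨⟨i, Nat.lt_succ_of_lt i.2⟩, ?_, ?_⟩
            · have h : ((⟨(i : ℕ), Nat.lt_succ_of_lt i.2⟩ : Fin (m+1)) : ℕ) < m := i.2
              simp only [h, dif_pos]
              exact Finset.mem_insert_of_mem (Finset.mem_image.2 ⟨⟨u, huv⟩, by simpa using hi, rfl⟩)
            · have h : ((⟨(i : ℕ), Nat.lt_succ_of_lt i.2⟩ : Fin (m+1)) : ℕ) < m := i.2
              simp [h, hwv]
          · have hadj : (G.induce S).Adj ⟨u, huv⟩ ⟨w, hwv⟩ := huw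
            obtain ⟨i, hiu, hiw⟩ := hB.2.1 _ _ hadj
            refine ⟨⟨i, Nat.lt_succ_of_lt i.2⟩, ?_, ?_⟩
            · have h : ((⟨(i : ℕ), Nat.lt_succ_of_lt i.2⟩ : Fin (m+1)) : ℕ) < m := i.2
              simp only [h, dif_pos]
              exact Finset.mem_insert_of_mem (Finset.mem_image.2
                ⟨⟨u, huv⟩, by simpa using hiu, rfl⟩)
            · have h : ((⟨(i : ℕ), Nat.lt_succ_of_lt i.2⟩ : Fin (m+1)) : ℕ) < m := i.2
              simp only [h, dif_pos]
              exact Finset.mem_insert_of_mem (Finset.mem_image.2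
                ⟨⟨w, hwv⟩, by simpa using hiw, rfl⟩)
      · intro u i j l hij hjl hi hl
        by_cases huv : u = v
        · subst huv
          by_cases h : (j : ℕ) < m <;> simp [h]
        · have hi' : (i : ℕ) < m := by
            by_contra h
            simp only [h, dif_neg] at hi
            exact huv (Finset.mem_singleton.1 hi)
          have hl' : (l : ℕ) < m := by
            by_contra h
            simp only [h, dif_neg] at hl
            exact huv (Finset.mem_singleton.1 hl)
          have hj' : (j : ℕ) < m := lt_of_le_of_lt hjl hl'
          simp only [hi', dif_pos] at hi
          simp only [hl', dif_pos] at hl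
          simp only [hj', dif_pos]
          rcases Finset.mem_insert.1 hi with h | h
          · exact absurd h huv
          obtain ⟨a, ha, hau⟩ := Finset.mem_image.1 h
          rcases Finset.mem_insert.1 hl with h2 | h2
          · exact absurd h2 huv
          obtain ⟨b, hb, hbu⟩ := Finset.mem_image.1 h2
          have hab : a = b := Subtype.ext (hau.trans hbu.symm)
          subst hab
          have := hB.2.2 a ⟨i, hi'⟩ ⟨j, hj'⟩ ⟨l, hl'⟩ hij hjl ha hb
          exact Finset.mem_insert_of_mem (Finset.mem_image.2 ⟨a, this, hau⟩)
    · intro i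
      by_cases h : (i : ℕ) < m
      · simp only [h, dif_pos]
        calc (insert v ((B ⟨i, h⟩).image Subtype.val)).card
            ≤ ((B ⟨i, h⟩).image Subtype.val).card + 1 := Finset.card_insert_le _ _
          _ ≤ (B ⟨i, h⟩).card + 1 := by
              exact Nat.add_le_add_right (Finset.card_image_le) 1
          _ ≤ pathwidth (G.induce S) + 1 + 1 := Nat.add_le_add_right (hcard _) 1
      · simp only [h, dif_neg]
        simp
  · -- pathwidth (G.induce S) ≤ pathwidth G
    obtain ⟨m, B, hB, hcard⟩ := pw_spec G
    refine pw_le _ _ ⟨m, fun i => (B i).subtype (fun u => u ∈ S), ?_, ?_⟩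
    · refine ⟨?_, ?_, ?_⟩
      · rintro ⟨u, hu⟩
        obtain ⟨i, hi⟩ := hB.1 u
        exact ⟨i, Finset.mem_subtype.2 hi⟩
      · rintro ⟨u, hu⟩ ⟨w, hw⟩ huw
        obtain ⟨i, hiu, hiw⟩ := hB.2.1 u w huw
        exact ⟨i, Finset.mem_subtype.2 hiu, Finset.mem_subtype.2 hiw⟩
      · rintro ⟨u, hu⟩ i j l hij hjl hi hl
        exact Finset.mem_subtype.2
          (hB.2.2 u i j l hij hjl (Finset.mem_subtype.1 hi) (Finset.mem_subtype.1 hl))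
    · intro i
      calc ((B i).subtype (fun u => u ∈ S)).card
          ≤ (B i).card := by
            rw [Finset.card_subtype]
            exact Finset.card_filter_le _ _
        _ ≤ pathwidth G + 1 := hcard i
  · -- degree ≤ pathwidth G
    obtain ⟨m, B, hB, hcard⟩ := pw_spec G
    have hclique : ∀ u ∈ insert v (G.neighborFinset v), ∀ w ∈ insert v (G.neighborFinset v),
        u ≠ w → G.Adj u w := by
      intro u hu w hw huw
      rcases Finset.mem_insert.1 hu with rfl | hu
      · rcases Finset.mem_insert.1 hw with rfl | hw
        · exact absurd rfl huw
        · exact (G.mem_neighborFinset _ _).1 hw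
      · rcases Finset.mem_insert.1 hw with rfl | hw
        · exact ((G.mem_neighborFinset _ _).1 hu).symm
        · exact hsimp u w ((G.mem_neighborFinset _ _).1 hu) ((G.mem_neighborFinset _ _).1 hw) huw
    obtain ⟨i, hi⟩ := clique_subset_bag hB _ ⟨v, Finset.mem_insert_self _ _⟩ hclique
    have h1 : (insert v (G.neighborFinset v)).card = G.degree v + 1 := by
      rw [Finset.card_insert_of_notMem (by simp), G.card_neighborFinset_eq_degree]
    have h2 : (insert v (G.neighborFinset v)).card ≤ (B i).card := Finset.card_le_card hi
    have := hcard i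
    omega
end

section
/- The number of sequences of integers in {0, 1, …, k} that alternate between local maxima and local minima, where the subsequence of local minima is first strictly decreasing then strictly increasing and each local maximum exceeds its neighboring local minima (the 'typical sequences' of width at most k), is at most 2^{O(k)}; concretely, it is bounded by 2^{2k+2}. -/
/-!
A typical sequence that starts at the minimum `a` of its values is forced by its set of values:
an occurrence of the maximum at distance at least two from `a` would span an interval with
no entry outside its range, so the maximum comes right after `a`, and the rest is the same
situation with the order reversed. It is thus the "inward zigzag" min, max, min, … of its values.

Split a typical sequence at the first occurrence of its minimum `m`, as `L ++ m :: R`. Both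
`m :: R` and `m :: L.reverse` start at their minimum, so the sequence is determined by `m` and
the value sets of `L` and `R`. As `m ∉ L`, the set of `L` has room to record whether `m ∈ R`, so two
subsets of `{0, …, k}` suffice, giving at most `2 ^ (k + 1) * 2 ^ (k + 1)` sequences.
-/

/-- The typical sequences with values in `{0, …, k}`: integer sequences with no two
consecutive equal entries that are irreducible under the simplification operation,
i.e. no interval can be removed because between any two entries at distance at
least two there is an entry lying strictly outside the range they span. -/
def TypicalSeq (k : ℕ) : Set (List ℤ) :=
  {l : List ℤ | (∀ x ∈ l, 0 ≤ x ∧ x ≤ (k : ℤ)) ∧ l.Chain' (· ≠ ·) ∧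
    ∀ i j : ℕ, i + 2 ≤ j → j < l.length →
      ∃ t, i < t ∧ t < j ∧
        (l.getD t 0 < min (l.getD i 0) (l.getD j 0) ∨
          max (l.getD i 0) (l.getD j 0) < l.getD t 0)}

open OrderDual

namespace List

variable {α : Type*} [LinearOrder α]

def IsTypical (l : List α) : Prop :=
  l.IsChain (· ≠ ·) ∧
    ∀ x y mid, x :: mid ++ [y] <:+: l → mid ≠ [] → ∃ z ∈ mid, z ∉ Set.uIcc x y

variable {l l' : List α}

theorem IsTypical.infix (h : IsTypical l) (hl : l' <:+: l) : IsTypical l' :=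
  ⟨h.1.infix hl, fun x y mid hxy => h.2 x y mid (hxy.trans hl)⟩

theorem IsTypical.reverse (h : IsTypical l) : IsTypical l.reverse := by
  refine ⟨isChain_reverse.2 (h.1.imp fun _ _ hab => hab.symm), fun x y mid hxy hmid => ?_⟩
  have hyx : y :: mid.reverse ++ [x] <:+: l := by simpa using hxy.reverse
  obtain ⟨z, hz, hzxy⟩ := h.2 y x mid.reverse hyx (by simpa using hmid)
  exact ⟨z, mem_reverse.1 hz, by rwa [Set.uIcc_comm]⟩

theorem IsTypical.map_toDual (h : IsTypical l) : IsTypical (l.map toDual) := by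
  refine ⟨(isChain_map _).2 (h.1.imp fun _ _ hab => toDual.injective.ne hab),
    fun x y mid hxy hmid => ?_⟩
  have hxy' : ofDual x :: mid.map ofDual ++ [ofDual y] <:+: l := by
    simpa [Function.comp_def] using hxy.map ofDual
  obtain ⟨z, hz, hzxy⟩ := h.2 _ _ _ hxy' (by simpa using hmid)
  obtain ⟨w, hw, rfl⟩ := mem_map.1 hz
  exact ⟨w, hw, by rwa [Set.uIcc_ofDual] at hzxy⟩

theorem IsTypical.lt_second_of_head_le {a x : α} {r : List α} (h : IsTypical (a :: x :: r))
    (ha : ∀ z ∈ x :: r, a ≤ z) : ∀ z ∈ r, z < x := by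
  obtain ⟨T, hTmem, hT⟩ : ∃ T ∈ a :: x :: r, ∀ z ∈ a :: x :: r, z ≤ T :=
    ⟨_, max_mem (cons_ne_nil _ _), fun z hz => le_max_of_mem hz⟩
  have hTr : T ∉ r := by
    intro hTr
    obtain ⟨r₁, r₂, rfl⟩ := append_of_mem hTr
    obtain ⟨z, hz, hzT⟩ := h.2 a T (x :: r₁) ⟨[], r₂, by simp⟩ (cons_ne_nil _ _)
    have hzl : z ∈ x :: (r₁ ++ T :: r₂) := cons_subset_cons x (subset_append_left _ _) hz
    exact hzT (Set.mem_uIcc_of_le (ha z hzl) (hT z (mem_cons_of_mem a hzl)))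
  have hxT : x = T := by
    rcases mem_cons.1 hTmem with rfl | hTx
    · exact absurd (le_antisymm (hT x (by simp)) (ha x mem_cons_self)).symm
        (isChain_cons_cons.1 h.1).1
    · exact ((mem_cons.1 hTx).resolve_right hTr).symm
  exact fun z hz => (hxT ▸ hT z (by simp [hz])).lt_of_ne fun hzx => hTr (hxT ▸ hzx ▸ hz)

theorem IsTypical.eq_of_head_le_of_mem_iff {α : Type*} [LinearOrder α] {a : α} :
    ∀ {s t : List α}, IsTypical (a :: s) → IsTypical (a :: t) →
      (∀ z ∈ s, a ≤ z) → (∀ z ∈ t, a ≤ z) → (∀ z, z ∈ s ↔ z ∈ t) → s = t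
  | [], t, _, _, _, _, hst =>
    (eq_nil_iff_forall_not_mem.2 fun z hz => by simpa using (hst z).2 hz).symm
  | _ :: _, [], _, _, _, _, hst => by simpa using (hst _).1 mem_cons_self
  | x :: r, y :: r', hs, ht, has, hat, hst => by
    have hr := hs.lt_second_of_head_le has
    have hr' := ht.lt_second_of_head_le hat
    obtain rfl : x = y := by
      rcases mem_cons.1 ((hst x).1 mem_cons_self) with hxy | hxr'
      · exact hxy
      rcases mem_cons.1 ((hst y).2 mem_cons_self) with hyx | hyr
      · exact hyx.symm
      exact absurd (hr' x hxr') (hr y hyr).not_gt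
    have hrr' : ∀ z, z ∈ r ↔ z ∈ r' := fun z => by
      have := hst z
      grind
    have key := IsTypical.eq_of_head_le_of_mem_iff (α := αᵒᵈ) (a := toDual x)
      (s := r.map toDual) (t := r'.map toDual) (hs.infix (suffix_cons _ _).isInfix).map_toDual
      (ht.infix (suffix_cons _ _).isInfix).map_toDual
      (forall_mem_map.2 fun z hz => (hr z hz).le) (forall_mem_map.2 fun z hz => (hr' z hz).le)
      (fun z => by simp [hrr'])
    rw [(map_inj_right toDual.injective).1 key]
termination_by s => s.length

def IsFirstMinSplit (l L : List α) (m : α) (R : List α) : Prop :=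
  l = L ++ m :: R ∧ m ∉ L ∧ ∀ z ∈ l, m ≤ z

theorem exists_isFirstMinSplit (hl : l ≠ []) : ∃ L m R, IsFirstMinSplit l L m R := by
  obtain ⟨L, R, hmL, hl', -⟩ := exists_erase_eq (min_mem hl)
  exact ⟨L, _, R, hl', hmL, fun z hz => min_le_of_mem hz⟩

def splitCode (L : List α) (m : α) (R : List α) : Finset α × Finset α :=
  (insert m R.toFinset, if m ∈ R then insert m L.toFinset else L.toFinset)

theorem IsTypical.eq_of_splitCode_eq {l₁ l₂ L₁ R₁ L₂ R₂ : List α} {m₁ m₂ : α}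
    (h₁ : IsTypical l₁) (h₂ : IsTypical l₂)
    (hs₁ : IsFirstMinSplit l₁ L₁ m₁ R₁) (hs₂ : IsFirstMinSplit l₂ L₂ m₂ R₂)
    (he : splitCode L₁ m₁ R₁ = splitCode L₂ m₂ R₂) : l₁ = l₂ := by
  obtain ⟨rfl, hL₁, hm₁⟩ := hs₁
  obtain ⟨rfl, hL₂, hm₂⟩ := hs₂
  simp only [splitCode, Prod.mk.injEq, Finset.ext_iff] at he
  obtain ⟨hA, hB⟩ := he
  obtain rfl : m₁ = m₂ := by
    have h₁₂ := (hA m₁).1 (Finset.mem_insert_self _ _)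
    have h₂₁ := (hA m₂).2 (Finset.mem_insert_self _ _)
    simp only [Finset.mem_insert, mem_toFinset] at h₁₂ h₂₁
    apply le_antisymm <;> grind
  have hR : ∀ z, z ∈ R₁ ↔ z ∈ R₂ := by
    intro z
    have := hA z
    have := hB m₁
    grind [mem_toFinset]
  have hL : ∀ z, z ∈ L₁ ↔ z ∈ L₂ := by
    intro z
    have := hB z
    grind [mem_toFinset]
  have hReq : R₁ = R₂ :=
    (h₁.infix (suffix_append _ _).isInfix).eq_of_head_le_of_mem_iff
      (h₂.infix (suffix_append _ _).isInfix) (fun z hz => hm₁ z (by simp [hz]))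
      (fun z hz => hm₂ z (by simp [hz])) hR
  have hLeq : L₁.reverse = L₂.reverse := by
    have h₁' : IsTypical (m₁ :: L₁.reverse) := by
      simpa using (h₁.infix (l' := L₁ ++ [m₁]) ⟨[], R₁, by simp⟩).reverse
    have h₂' : IsTypical (m₁ :: L₂.reverse) := by
      simpa using (h₂.infix (l' := L₂ ++ [m₁]) ⟨[], R₂, by simp⟩).reverse
    exact h₁'.eq_of_head_le_of_mem_iff h₂' (fun z hz => hm₁ z (by simp_all))
      (fun z hz => hm₂ z (by simp_all)) (by simpa using hL)
  rw [hReq, reverse_inj.1 hLeq]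

theorem setOf_isTypical_finite_and_ncard_le (s : Finset α) :
    {l : List α | (∀ x ∈ l, x ∈ s) ∧ IsTypical l}.Finite ∧
      {l : List α | (∀ x ∈ l, x ∈ s) ∧ IsTypical l}.ncard ≤ 2 ^ (2 * s.card) := by
  set S := {l : List α | (∀ x ∈ l, x ∈ s) ∧ IsTypical l}
  choose L m R hsplit using fun (l : List α) (hl : l ≠ []) => exists_isFirstMinSplit hl
  let code (l : List α) : Finset α × Finset α :=
    if hl : l = [] then (∅, ∅) else splitCode (L l hl) (m l hl) (R l hl)
  have hmaps : Set.MapsTo code S (s.powerset ×ˢ s.powerset : Finset _) := by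
    rintro l ⟨hls, -⟩
    by_cases hl : l = []
    · simp [code, hl]
    obtain ⟨hl', -, -⟩ := hsplit l hl
    rw [hl'] at hls
    clear hsplit hl'
    simp only [code, hl, dite_false, splitCode, Finset.coe_product, Finset.coe_powerset]
    split_ifs <;> simp_all [Set.subset_def]
  have hinj : Set.InjOn code S := by
    rintro l₁ ⟨-, ht₁⟩ l₂ ⟨-, ht₂⟩ he
    by_cases h₁ : l₁ = [] <;> by_cases h₂ : l₂ = []
    · rw [h₁, h₂]
    · simp [code, h₁, h₂, splitCode, eq_comm (a := ∅)] at he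
    · simp [code, h₁, h₂, splitCode] at he
    · simp only [code, h₁, h₂, dite_false] at he
      exact ht₁.eq_of_splitCode_eq ht₂ (hsplit l₁ h₁) (hsplit l₂ h₂) he
  refine ⟨Set.Finite.of_injOn hmaps hinj (Finset.finite_toSet _), ?_⟩
  calc S.ncard ≤ ((s.powerset ×ˢ s.powerset : Finset _) : Set _).ncard :=
        Set.ncard_le_ncard_of_injOn code (fun _ h => hmaps h) hinj (Finset.finite_toSet _)
    _ = 2 ^ (2 * s.card) := by
        rw [Set.ncard_coe_finset, Finset.card_product, Finset.card_powerset, two_mul, pow_add]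

end List

theorem typicalSeq_subset_setOf_isTypical (k : ℕ) :
    TypicalSeq k ⊆
      {l : List ℤ | (∀ x ∈ l, x ∈ Finset.Icc 0 (k : ℤ)) ∧ l.IsTypical} := by
  rintro l ⟨hbd, hchain, hsep⟩
  refine ⟨fun x hx => Finset.mem_Icc.2 (hbd x hx), hchain, ?_⟩
  rintro x y mid ⟨s, u, rfl⟩ hmid
  have hget : ∀ n (hn : n < (x :: mid ++ [y]).length),
      (s ++ (x :: mid ++ [y]) ++ u).getD (s.length + n) 0 = (x :: mid ++ [y])[n] := by
    intro n hn
    rw [List.getD_eq_getElem?_getD, List.append_assoc, List.getElem?_append_right (by omega),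
      Nat.add_sub_cancel_left, List.getElem?_append_left hn, List.getElem?_eq_getElem hn,
      Option.getD_some]
  have hlen := List.length_pos_of_ne_nil hmid
  obtain ⟨t, hit, htj, hout⟩ :=
    hsep (s.length + 0) (s.length + (mid.length + 1)) (by omega) (by simp)
  obtain ⟨n, rfl⟩ : ∃ n, t = s.length + (n + 1) := ⟨t - s.length - 1, by omega⟩
  have hn : n < mid.length := by omega
  rw [hget 0 (by simp), hget (mid.length + 1) (by simp), hget (n + 1) (by simp; omega)] at hout
  refine ⟨mid[n], List.getElem_mem _, ?_⟩
  simp only [Set.uIcc, Set.mem_Icc, not_and_or, not_le]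
  simpa [List.getElem_append_left hn] using hout

/-- Bodlaender–Kloks, Lemma 3.5: the number of typical sequences with values in
`{0, …, k}` is at most `2^{2k+2} = 2^{O(k)}`. -/
theorem card_typicalSeq_le (k : ℕ) :
    (TypicalSeq k).Finite ∧ Nat.card (TypicalSeq k) ≤ 2 ^ (2 * k + 2) := by
  obtain ⟨hfin, hcard⟩ := List.setOf_isTypical_finite_and_ncard_le (Finset.Icc (0 : ℤ) k)
  have hsub := typicalSeq_subset_setOf_isTypical k
  refine ⟨hfin.subset hsub, ?_⟩
  calc Nat.card (TypicalSeq k) = (TypicalSeq k).ncard := Nat.card_coe_set_eq _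
    _ ≤ _ := Set.ncard_le_ncard hsub hfin
    _ ≤ 2 ^ (2 * (Finset.Icc (0 : ℤ) k).card) := hcard
    _ = 2 ^ (2 * k + 2) := by rw [Int.card_Icc]; congr 1
end
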